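/- Under the assumptions of the Arnoldi-OR error bound, if additionally A is diagonalizable as A = V Λ V^{-1} with Λ = diag(λ_1,...,λ_n), then ‖R(A)b − x_k‖_2 / ‖b‖_2 ≤ κ(S)^{1/2} κ(V) · min over polynomials p of degree ≤ k−1 of max_i |R(λ_i) − p(λ_i)|. -/

import Mathlib

/-- The Krylov space `K_k(A,b) = span{b, Ab, ..., A^{k-1}b}`. -/
noncomputable def Krylov (n : ℕ) (A : Matrix (Fin n) (Fin n) ℂ) (b : EuclideanSpace ℂ (Fin n))
    (k : ℕ) : Submodule ℂ (EuclideanSpace ℂ (Fin n)) :=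
  Submodule.span ℂ {x | ∃ i < k, x = (A ^ i).mulVec b}

/-- The `S`-norm `‖v‖_S = ⟨v, S v⟩^{1/2}` for a matrix `S`. -/
noncomputable def Snorm (n : ℕ) (S : Matrix (Fin n) (Fin n) ℂ)
    (v : EuclideanSpace ℂ (Fin n)) : ℝ :=
  Real.sqrt (@inner ℂ (EuclideanSpace ℂ (Fin n)) _ v (WithLp.toLp 2 (S.mulVec v))).re

/-- The operator 2-norm of a matrix. -/
noncomputable def opNorm {m : ℕ} (M : Matrix (Fin m) (Fin m) ℂ) : ℝ :=
  ‖Matrix.toEuclideanCLM (𝕜 := ℂ) M‖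

/-!
Since `‖v‖_S = ‖D(A) v‖₂`, comparing `x_k` with the Krylov vector `p(A) b` gives
`‖R(A)b - x_k‖₂ ≤ ‖D(A)⁻¹‖ ‖D(A)‖ ‖(R(A) - p(A)) b‖₂`, and
`‖D(A)⁻¹‖ ‖D(A)‖ = κ(S)^{1/2}` by the C*-identity `‖MᴴM‖ = ‖M‖²`. Diagonalizing,
`R(A) - p(A) = V diag(R(λ_i) - p(λ_i)) V⁻¹`, whose 2-norm is at most
`κ(V) max_i |R(λ_i) - p(λ_i)|`.
-/

open Polynomial Matrix
open scoped Matrix.Norms.L2Operator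

section Diagonalizable

variable {ι : Type*} [Fintype ι] [DecidableEq ι]

section CommRing

variable {R : Type*} [CommRing R] {V : Matrix ι ι R}

theorem aeval_conj_diagonal (hV : IsUnit V) (lam : ι → R) (q : R[X]) :
    aeval (V * diagonal lam * V⁻¹) q = V * diagonal (fun i => q.eval (lam i)) * V⁻¹ := by
  obtain ⟨u, rfl⟩ := hV
  have hconj (X : Matrix ι ι R) : MulSemiringAction.toAlgEquiv R _ (ConjAct.toConjAct u) X
      = (u : Matrix ι ι R) * X * (u : Matrix ι ι R)⁻¹ := by
    simp [ConjAct.units_smul_def, Matrix.coe_units_inv]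
  rw [← hconj, ← hconj, aeval_algHom_apply, ← diagonalAlgHom_apply R,
    aeval_algHom_apply, aeval_pi_apply]
  rfl

theorem conj_mul_conj (hV : IsUnit V) (X Y : Matrix ι ι R) :
    V * X * V⁻¹ * (V * Y * V⁻¹) = V * (X * Y) * V⁻¹ := by
  rw [mul_assoc (V * X), ← mul_assoc V⁻¹, ← mul_assoc V⁻¹,
    nonsing_inv_mul _ ((isUnit_iff_isUnit_det V).mp hV), one_mul]
  noncomm_ring

end CommRing

variable {K : Type*} [Field K] {V : Matrix ι ι K}

theorem inv_conj_diagonal (hV : IsUnit V) {d : ι → K} (hd : ∀ i, d i ≠ 0) :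
    (V * diagonal d * V⁻¹)⁻¹ = V * diagonal d⁻¹ * V⁻¹ := by
  refine inv_eq_left_inv ?_
  rw [conj_mul_conj hV, diagonal_mul_diagonal]
  simp [hd, mul_nonsing_inv _ ((isUnit_iff_isUnit_det V).mp hV)]

theorem isUnit_aeval_of_eval_ne_zero {A : Matrix ι ι K} (hV : IsUnit V) {lam : ι → K}
    (hA : A = V * diagonal lam * V⁻¹) {D : K[X]} (hD : ∀ i, D.eval (lam i) ≠ 0) :
    IsUnit (aeval A D) := by
  rw [hA, aeval_conj_diagonal hV, isUnit_iff_isUnit_det, det_conj hV, det_diagonal,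
    isUnit_iff_ne_zero]
  exact Finset.prod_ne_zero_iff.mpr fun i _ => hD i

theorem aeval_inv_mul_aeval_sub_aeval {A : Matrix ι ι K} (hV : IsUnit V) {lam : ι → K}
    (hA : A = V * diagonal lam * V⁻¹) {D : K[X]} (hD : ∀ i, D.eval (lam i) ≠ 0)
    (N p : K[X]) :
    (aeval A D)⁻¹ * aeval A N - aeval A p =
      V * diagonal (fun i => N.eval (lam i) / D.eval (lam i) - p.eval (lam i)) * V⁻¹ := by
  rw [hA, aeval_conj_diagonal hV, aeval_conj_diagonal hV, aeval_conj_diagonal hV,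
    inv_conj_diagonal hV hD, conj_mul_conj hV, ← Matrix.sub_mul, ← Matrix.mul_sub,
    diagonal_mul_diagonal, diagonal_sub]
  simp only [Pi.inv_apply, div_eq_inv_mul]

end Diagonalizable

section EuclideanOperators

variable {n : ℕ}

theorem equiv_symm_mulVec_eq_toEuclideanCLM {ι 𝕜 : Type*} [RCLike 𝕜] [Fintype ι]
    [DecidableEq ι] (M : Matrix ι ι 𝕜) (v : EuclideanSpace 𝕜 ι) :
    (WithLp.equiv 2 (ι → 𝕜)).symm (M *ᵥ v) = toEuclideanCLM (𝕜 := 𝕜) M v :=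
  rfl

theorem opNorm_eq_l2_opNorm (M : Matrix (Fin n) (Fin n) ℂ) : opNorm M = ‖M‖ := by
  rw [opNorm, l2_opNorm_def]
  rfl

theorem opNorm_diagonal (d : Fin n → ℂ) : opNorm (diagonal d) = ⨆ i, ‖d i‖ := by
  rw [opNorm_eq_l2_opNorm, l2_opNorm_diagonal, ← PiLp.norm_toLp (β := fun _ => ℂ),
    PiLp.norm_eq_ciSup]

theorem opNorm_conj_diagonal_le (V : Matrix (Fin n) (Fin n) ℂ) (d : Fin n → ℂ) :
    opNorm (V * diagonal d * V⁻¹) ≤ opNorm V * opNorm V⁻¹ * ⨆ i, ‖d i‖ := by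
  simp only [← opNorm_diagonal, opNorm_eq_l2_opNorm]
  calc ‖V * diagonal d * V⁻¹‖ ≤ ‖V‖ * ‖diagonal d‖ * ‖V⁻¹‖ := norm_mul₃_le
    _ = ‖V‖ * ‖V⁻¹‖ * ‖diagonal d‖ := by ring

theorem norm_conj_diagonal_apply_le (V : Matrix (Fin n) (Fin n) ℂ) (d : Fin n → ℂ)
    (v : EuclideanSpace ℂ (Fin n)) :
    ‖toEuclideanCLM (𝕜 := ℂ) (V * diagonal d * V⁻¹) v‖
      ≤ opNorm V * opNorm V⁻¹ * (⨆ i, ‖d i‖) * ‖v‖ :=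
  (ContinuousLinearMap.le_opNorm _ v).trans
    (mul_le_mul_of_nonneg_right (opNorm_conj_diagonal_le V d) (norm_nonneg v))

-- Also true for singular `M`: `Matrix.inv` is then `0` on both sides.
theorem sqrt_opNorm_conjTranspose_mul_self_mul_opNorm_inv (M : Matrix (Fin n) (Fin n) ℂ) :
    √(opNorm (Mᴴ * M) * opNorm (Mᴴ * M)⁻¹) = opNorm M * opNorm M⁻¹ := by
  have hinv : (Mᴴ * M)⁻¹ = (M⁻¹ᴴ)ᴴ * M⁻¹ᴴ := by
    rw [Matrix.mul_inv_rev, conjTranspose_conjTranspose, conjTranspose_nonsing_inv]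
  simp only [hinv, opNorm_eq_l2_opNorm, l2_opNorm_conjTranspose_mul_self, l2_opNorm_conjTranspose]
  rw [mul_mul_mul_comm, Real.sqrt_mul_self (by positivity)]

theorem Snorm_conjTranspose_mul_self (M : Matrix (Fin n) (Fin n) ℂ)
    (v : EuclideanSpace ℂ (Fin n)) :
    Snorm n (Mᴴ * M) v = ‖toEuclideanCLM (𝕜 := ℂ) M v‖ := by
  have hadj : WithLp.toLp 2 ((Mᴴ * M) *ᵥ v) =
      (star (toEuclideanCLM (𝕜 := ℂ) M) * toEuclideanCLM (𝕜 := ℂ) M) v := by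
    rw [← map_star, star_eq_conjTranspose, ← map_mul]
    rfl
  rw [Snorm, hadj, ContinuousLinearMap.star_eq_adjoint, mul_apply_eq_comp,
    ContinuousLinearMap.adjoint_inner_right, ← RCLike.re_to_complex,
    inner_self_eq_norm_sq, Real.sqrt_sq (norm_nonneg _)]

end EuclideanOperators

theorem ContinuousLinearMap.norm_le_mul_of_leftInverse_of_norm_apply_le {𝕜 E F : Type*}
    [NontriviallyNormedField 𝕜] [SeminormedAddCommGroup E] [SeminormedAddCommGroup F]
    [NormedSpace 𝕜 E] [NormedSpace 𝕜 F]
    {T : E →L[𝕜] F} {S : F →L[𝕜] E} (hST : Function.LeftInverse S T) {e y : E}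
    (h : ‖T e‖ ≤ ‖T y‖) : ‖e‖ ≤ ‖S‖ * ‖T‖ * ‖y‖ :=
  calc ‖e‖ = ‖S (T e)‖ := by rw [hST e]
    _ ≤ ‖S‖ * ‖T e‖ := S.le_opNorm _
    _ ≤ ‖S‖ * (‖T‖ * ‖y‖) := by gcongr; exact h.trans (T.le_opNorm _)
    _ = ‖S‖ * ‖T‖ * ‖y‖ := (mul_assoc ..).symm

theorem toEuclideanCLM_aeval_mem_krylov {n k : ℕ} (A : Matrix (Fin n) (Fin n) ℂ)
    (b : EuclideanSpace ℂ (Fin n)) {p : ℂ[X]} (hp : p.degree < k) :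
    toEuclideanCLM (𝕜 := ℂ) (aeval A p) b ∈ Krylov n A b k := by
  rcases eq_or_ne p 0 with rfl | hp0
  · simp
  rw [aeval_eq_sum_range' ((natDegree_lt_iff_degree_lt hp0).mpr hp), map_sum,
    _root_.sum_apply]
  refine Submodule.sum_mem _ fun i hi => ?_
  rw [map_smul, _root_.smul_apply]
  exact Submodule.smul_mem _ _ (Submodule.subset_span ⟨i, Finset.mem_range.mp hi, rfl⟩)

open Polynomial Matrix in
theorem stmt7_general (n k : ℕ) (A : Matrix (Fin n) (Fin n) ℂ)
    (V : Matrix (Fin n) (Fin n) ℂ) (hV : IsUnit V) (lam : Fin n → ℂ)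
    (hdiag : A = V * Matrix.diagonal lam * V⁻¹)
    (D N : Polynomial ℂ) (hDlam : ∀ i, D.eval (lam i) ≠ 0)
    (b : EuclideanSpace ℂ (Fin n))
    (xk : EuclideanSpace ℂ (Fin n))
    (hmin : ∀ x ∈ Krylov n A b k,
      Snorm n ((aeval A D)ᴴ * aeval A D)
        ((WithLp.equiv 2 (Fin n → ℂ)).symm (((aeval A D)⁻¹ * aeval A N).mulVec b) - xk)
      ≤ Snorm n ((aeval A D)ᴴ * aeval A D)
        ((WithLp.equiv 2 (Fin n → ℂ)).symm (((aeval A D)⁻¹ * aeval A N).mulVec b) - x)) :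
    ∀ p : Polynomial ℂ, p.degree < (k : WithBot ℕ) →
      ‖((WithLp.equiv 2 (Fin n → ℂ)).symm (((aeval A D)⁻¹ * aeval A N).mulVec b) - xk :
          EuclideanSpace ℂ (Fin n))‖ / ‖b‖
      ≤ Real.sqrt (opNorm ((aeval A D)ᴴ * aeval A D) * opNorm (((aeval A D)ᴴ * aeval A D)⁻¹))
        * (opNorm V * opNorm V⁻¹)
        * ⨆ i : Fin n, ‖N.eval (lam i) / D.eval (lam i) - p.eval (lam i)‖ := by
  intro p hp
  set M := aeval A D
  have hM := isUnit_aeval_of_eval_ne_zero hV hdiag hDlam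
  have hMinv : Function.LeftInverse (toEuclideanCLM (𝕜 := ℂ) M⁻¹)
      (toEuclideanCLM (𝕜 := ℂ) M) := fun x => by
    rw [← mul_apply_eq_comp, ← map_mul, nonsing_inv_mul M ((isUnit_iff_isUnit_det M).mp hM),
      map_one, one_apply_eq_self]
  simp only [equiv_symm_mulVec_eq_toEuclideanCLM, Snorm_conjTranspose_mul_self] at hmin ⊢
  have hquasi := ContinuousLinearMap.norm_le_mul_of_leftInverse_of_norm_apply_le hMinv
    (hmin _ (toEuclideanCLM_aeval_mem_krylov A b hp))
  rw [← _root_.sub_apply, ← map_sub, aeval_inv_mul_aeval_sub_aeval hV hdiag hDlam] at hquasi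
  rw [sqrt_opNorm_conjTranspose_mul_self_mul_opNorm_inv]
  have hbound_nonneg : 0 ≤ opNorm M * opNorm M⁻¹ * (opNorm V * opNorm V⁻¹)
      * ⨆ i, ‖N.eval (lam i) / D.eval (lam i) - p.eval (lam i)‖ := by
    simp only [opNorm_eq_l2_opNorm]
    exact mul_nonneg (by positivity) (Real.iSup_nonneg fun _ => norm_nonneg _)
  refine div_le_of_le_mul₀ (norm_nonneg _) hbound_nonneg ?_
  calc _ ≤ _ := hquasi
    _ ≤ _ := mul_le_mul_of_nonneg_left (norm_conj_diagonal_apply_le V _ b) (by positivity)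
    _ = _ := by unfold opNorm; ring

open Polynomial Matrix in
/-- If additionally `A = V Λ V⁻¹` is diagonalizable, the Arnoldi-OR error satisfies
`‖R(A)b − x_k‖₂/‖b‖₂ ≤ κ(S)^{1/2} κ(V) · min_{deg p ≤ k-1} max_i |R(λ_i) − p(λ_i)|`. -/
theorem stmt7 (n k : ℕ) (hn : 0 < n) (A : Matrix (Fin n) (Fin n) ℂ)
    (V : Matrix (Fin n) (Fin n) ℂ) (hV : IsUnit V) (lam : Fin n → ℂ)
    (hdiag : A = V * Matrix.diagonal lam * V⁻¹)
    (D N : Polynomial ℂ) (hDlam : ∀ i, D.eval (lam i) ≠ 0) (hD : IsUnit (aeval A D))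
    (b : EuclideanSpace ℂ (Fin n)) (hb : b ≠ 0)
    (xk : EuclideanSpace ℂ (Fin n)) (hmem : xk ∈ Krylov n A b k)
    (hmin : ∀ x ∈ Krylov n A b k,
      Snorm n ((aeval A D)ᴴ * aeval A D)
        ((WithLp.equiv 2 (Fin n → ℂ)).symm (((aeval A D)⁻¹ * aeval A N).mulVec b) - xk)
      ≤ Snorm n ((aeval A D)ᴴ * aeval A D)
        ((WithLp.equiv 2 (Fin n → ℂ)).symm (((aeval A D)⁻¹ * aeval A N).mulVec b) - x)) :
    ∀ p : Polynomial ℂ, p.degree < (k : WithBot ℕ) →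
      ‖((WithLp.equiv 2 (Fin n → ℂ)).symm (((aeval A D)⁻¹ * aeval A N).mulVec b) - xk :
          EuclideanSpace ℂ (Fin n))‖ / ‖b‖
      ≤ Real.sqrt (opNorm ((aeval A D)ᴴ * aeval A D) * opNorm (((aeval A D)ᴴ * aeval A D)⁻¹))
        * (opNorm V * opNorm V⁻¹)
        * ⨆ i : Fin n, ‖N.eval (lam i) / D.eval (lam i) - p.eval (lam i)‖ :=
  stmt7_general n k A V hV lam hdiag D N hDlam b xk hmin
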